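/- For all λ > 0 and r ≥ 0, ∫_r^∞ (2r/h²) · 4πλ^{3/2} h² e^{−λπh²} dh = 4λπ r · erfc(r√(λπ)), where erfc(z) := (2/√π) ∫_z^∞ e^{−u²} du. That is, if H has density 4πλ^{3/2}h²e^{−λπh²} on [0,∞) and, given H = h, R has conditional density 2r/h² on [0, h], then the marginal density of R is f(r) = 4λπ r · erfc(r√(λπ)). -/
import Mathlib


open MeasureTheory Set

/-- The complementary error function `erfc(z) = (2/√π) ∫_z^∞ e^{−u²} du`. -/
noncomputable def erfc (z : ℝ) : ℝ := 2 / Real.sqrt Real.pi * ∫ u in Set.Ioi z, Real.exp (-u ^ 2)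

/-- Marginal density of the serving distance at a typical max-interference epoch:
if `H` has density `4πλ^{3/2}h²e^{−λπh²}` on `[0,∞)` and, given `H = h`, `R` has
conditional density `2r/h²` on `[0,h]`, then
`∫_r^∞ (2r/h²) · 4πλ^{3/2} h² e^{−λπh²} dh = 4λπ r · erfc(r√(λπ))`. -/
theorem stmt_12 (lam r : ℝ) (hlam : 0 < lam) (hr : 0 ≤ r) :
    (∫ h in Ioi r,
        2 * r / h ^ 2 *
          (4 * Real.pi * lam ^ ((3:ℝ)/2) * h ^ 2 * Real.exp (-(lam * Real.pi * h ^ 2)))) =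
      4 * lam * Real.pi * r * erfc (r * Real.sqrt (lam * Real.pi)) := by
  have hπ := Real.pi_pos
  set c := Real.sqrt (lam * Real.pi) with hc
  have hc0 : 0 < c := Real.sqrt_pos.2 (by positivity)
  have h1 : (∫ h in Ioi r,
        2 * r / h ^ 2 *
          (4 * Real.pi * lam ^ ((3:ℝ)/2) * h ^ 2 * Real.exp (-(lam * Real.pi * h ^ 2)))) =
      ∫ h in Ioi r, (8 * Real.pi * lam ^ ((3:ℝ)/2) * r) * Real.exp (-(c * h) ^ 2) := by
    apply setIntegral_congr_fun measurableSet_Ioi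
    intro h hh
    have hh0 : 0 < h := lt_of_le_of_lt hr hh
    have hsq : (c * h) ^ 2 = lam * Real.pi * h ^ 2 := by
      rw [mul_pow, hc, Real.sq_sqrt (by positivity)]
    dsimp only
    rw [← hsq]
    field_simp
    ring
  rw [h1, MeasureTheory.integral_const_mul,
    integral_comp_mul_left_Ioi (fun u => Real.exp (-u ^ 2)) r hc0]
  have hrw : c * r = r * c := mul_comm c r
  rw [hrw, erfc, smul_eq_mul]
  have hsqrt : Real.sqrt Real.pi ≠ 0 := by positivity
  have hkey : 8 * Real.pi * lam ^ ((3:ℝ)/2) * r * c⁻¹ =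
      4 * lam * Real.pi * r * (2 / Real.sqrt Real.pi) := by
    have h32 : lam ^ ((3:ℝ)/2) = lam * Real.sqrt lam := by
      rw [show (3:ℝ)/2 = 1 + 1/2 by norm_num, Real.rpow_add hlam, Real.rpow_one,
        Real.sqrt_eq_rpow]
    have hcm : c = Real.sqrt lam * Real.sqrt Real.pi := by
      rw [hc, Real.sqrt_mul hlam.le]
    have hsl : Real.sqrt lam ≠ 0 := by positivity
    rw [h32, hcm]
    field_simp
    ring
  rw [← mul_assoc, hkey]
  ring
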